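/- Let [a,b] be a proper interval in S^d with l(a) ≠ l(b). Then [a,b] contains no flat step, i.e., for every c with a ⪯ c ≺ b, l(c) ≠ l(s(c)). -/

import Mathlib

open SimpleGraph

/-- Sorted list of the tuple set `S^d`: tuples with entries in {1,3} except
the last entry which is in {1,2,3,4}, of length between 1 and `d`,
listed in lexicographic order. -/
def Tl : ℕ → List (List ℕ)
  | 0 => []
  | k+1 => [[1]] ++ (Tl k).map (fun a => 1 :: a) ++ [[2], [3]]
            ++ (Tl k).map (fun a => 3 :: a) ++ [[4]]

/-- Strict lexicographic order on tuples (a proper prefix is smaller). -/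
def lexLt (a b : List ℕ) : Prop := List.Lex (· < ·) a b

def lexLe (a b : List ℕ) : Prop := a = b ∨ lexLt a b

/-- `v` is the successor of `u` in the lexicographic order on `S^d`. -/
def IsSucc (d : ℕ) (u v : List ℕ) : Prop :=
  v ∈ Tl d ∧ lexLt u v ∧ ∀ w ∈ Tl d, lexLt u w → lexLe v w

/-- The interval `[a,b]` in `S^d`. -/
def interval (d : ℕ) (a b : List ℕ) : Set (List ℕ) :=
  {c | c ∈ Tl d ∧ lexLe a c ∧ lexLe c b}

/-- `[a,b]` is a proper interval: no interior element has length `l(a)` or `l(b)`. -/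
def ProperInterval (d : ℕ) (a b : List ℕ) : Prop :=
  a ∈ Tl d ∧ b ∈ Tl d ∧ lexLe a b ∧
  ∀ c ∈ interval d a b, c ≠ a → c ≠ b →
    c.length ≠ a.length ∧ c.length ≠ b.length

/-- The set of left endpoints of flat steps of the interval `[a,b]`. -/
def flatSteps (d : ℕ) (a b : List ℕ) : Set (List ℕ) :=
  {c | c ∈ Tl d ∧ lexLe a c ∧ lexLt c b ∧ ∃ v, IsSucc d c v ∧ v.length = c.length}

/-- Vertices of `G_d`: elements of `S^d`, subdivision vertices, and centers. -/
inductive Vtx where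
  | elt : List ℕ → Vtx
  | sub : ℕ → Fin 2 → Vtx
  | ctr : ℕ → Vtx
deriving DecidableEq

/-- The path `P_d` as a list of vertices: the elements of `S^d` in order,
with two subdivision vertices between consecutive elements of equal length
and one otherwise. -/
def pathList (d : ℕ) : List Vtx :=
  ((Tl d).zipIdx.map Prod.swap).flatMap (fun p =>
    Vtx.elt p.2 :: (match (Tl d)[p.1 + 1]? with
      | none => []
      | some b =>
        if p.2.length = b.length then [Vtx.sub p.1 0, Vtx.sub p.1 1]
        else [Vtx.sub p.1 0]))

/-- `x` and `y` are consecutive in the list `l`. -/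
def ChainAdj {α : Type} (l : List α) (x y : α) : Prop :=
  ∃ i, (l[i]? = some x ∧ l[i+1]? = some y) ∨
       (l[i]? = some y ∧ l[i+1]? = some x)

/-- Adjacency from a center vertex. -/
def ctrAdj (d : ℕ) : Vtx → Vtx → Prop
  | Vtx.ctr k, Vtx.ctr m => k ≠ m ∧ 1 ≤ k ∧ k ≤ d ∧ 1 ≤ m ∧ m ≤ d
  | Vtx.ctr k, Vtx.elt a => 1 ≤ k ∧ k ≤ d ∧ a ∈ Tl d ∧ a.length = k
  | _, _ => False

/-- The vertex set of `G_d`. -/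
def VSet (d : ℕ) : Finset Vtx :=
  (pathList d).toFinset ∪ (Finset.Icc 1 d).image Vtx.ctr

def GdAdj (d : ℕ) (x y : Vtx) : Prop :=
  x ≠ y ∧ (ChainAdj (pathList d) x y ∨ ctrAdj d x y ∨ ctrAdj d y x)

/-- The graph `G_d`. -/
def Gd (d : ℕ) : SimpleGraph {x // x ∈ VSet d} where
  Adj x y := GdAdj d x.1 y.1
  symm := by
    constructor
    rintro x y ⟨hne, h⟩
    refine ⟨hne.symm, ?_⟩
    rcases h with ⟨i, hi⟩ | h | h
    · exact Or.inl ⟨i, hi.symm⟩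
    · exact Or.inr (Or.inr h)
    · exact Or.inr (Or.inl h)
  loopless := ⟨fun x h => h.1 rfl⟩

/-- A rank decomposition of a graph `G`: a finite cubic tree together with a
bijection from the vertices of `G` to the leaves of the tree. -/
structure RankDecomp {V : Type} [Fintype V] (G : SimpleGraph V) where
  t : Type
  fin : Fintype t
  tree : SimpleGraph t
  conn : tree.Connected
  acyc : tree.IsAcyclic
  two_le : 2 ≤ Nat.card t
  cubic : ∀ v : t, (tree.neighborSet v).ncard = 1 ∨ (tree.neighborSet v).ncard = 3
  leafEquiv : V ≃ {v : t // (tree.neighborSet v).ncard = 1}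

/-- The set of vertices of `G` whose leaf lies on the side of `a` of
the edge `ab` of the decomposition tree. -/
def RankDecomp.side {V : Type} [Fintype V] {G : SimpleGraph V}
    (D : RankDecomp G) (a b : D.t) : Set V :=
  {x | (D.tree.deleteEdges {s(a, b)}).Reachable (D.leafEquiv x).1 a}

/-- The cutrank function of `G`: the GF(2)-rank of the adjacency submatrix
between `X` and its complement. -/
noncomputable def cutRank {V : Type} [Fintype V] (G : SimpleGraph V) (X : Set V) : ℕ :=
  haveI : Fintype ↥X := Fintype.ofFinite _
  haveI : Fintype ↥(Xᶜ) := Fintype.ofFinite _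
  haveI : DecidableRel G.Adj := Classical.decRel _
  Matrix.rank (Matrix.of (fun (x : ↥X) (y : ↥(Xᶜ)) =>
    if G.Adj x.1 y.1 then (1 : ZMod 2) else 0))

/-- The decomposition `D` has width at most `k`. -/
def RankDecomp.WidthLE {V : Type} [Fintype V] {G : SimpleGraph V}
    (D : RankDecomp G) (k : ℕ) : Prop :=
  ∀ a b : D.t, D.tree.Adj a b → cutRank G (D.side a b) ≤ k

/-- The rank-width of `G`. -/
noncomputable def rankwidth {V : Type} [Fintype V] (G : SimpleGraph V) : ℕ :=
  sInf {k | ∃ D : RankDecomp G, D.WidthLE k}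

/-- `l` is an induced path in `G`: its vertices are distinct and two of them
are adjacent in `G` iff they are consecutive on `l`. -/
def IsInducedPathList {V : Type} (G : SimpleGraph V) (l : List V) : Prop :=
  l.Nodup ∧ ∀ x ∈ l, ∀ y ∈ l, (G.Adj x y ↔ ChainAdj l x y)

/-- The diamond: the complete graph on four vertices minus an edge. -/
def diamond : SimpleGraph (Fin 4) := (⊤ : SimpleGraph (Fin 4)).deleteEdges {s(2, 3)}

/-! Only `c ≺ s(c) ⪯ b` is used about the successor: it suffices that whenever `a ≺ c ≺ v ≺ b`
with `l(c) = l(v)` and `l(a) ≠ l(b)`, some element strictly between `a` and `b` has length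
`l(a)` or `l(b)`. Lengths in `S^d` have a discrete intermediate value property: below a longer
element `y` sits its prefix of any shorter length, and above a longer element `x` sits a prefix of
`x` with its last entry raised by one. This settles every case except `l(c)` strictly between
`l(a)` and `l(b)`. Then, writing `c = q t` (or `v = q t` when `l(a) > l(b)`), the tuple `q 1 1 ⋯ 1`
(resp. `q 3 1 ⋯ 1`) of length `l(b)` (resp. `l(a)`) lies strictly between `a` and `b`. -/
namespace List

variable {α : Type*} [LT α]

theorem lt_append_of_ne_nil [Std.Irrefl (· < · : α → α → Prop)] (q : List α) {w : List α}
    (hw : w ≠ []) : q < q ++ w := by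
  induction q with
  | nil => obtain ⟨j, w, rfl⟩ := exists_cons_of_ne_nil hw; exact nil_lt_cons j w
  | cons j q ih => exact cons_lt_cons_iff.2 (Or.inr ⟨rfl, ih⟩)

/-- Once `b` is no longer than `q`, comparing `q ++ s` with `b` is decided inside `q`. -/
theorem append_lt_of_append_lt_of_length_le {q s b : List α} (w : List α) (h : q ++ s < b)
    (hb : b.length ≤ q.length) : q ++ w < b := by
  induction q generalizing b with
  | nil => simp_all
  | cons j q ih =>
    cases b with
    | nil => exact absurd h (not_lt_nil _)
    | cons k b =>
      rcases cons_lt_cons_iff.1 h with hjk | ⟨rfl, htail⟩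
      · exact cons_lt_cons_iff.2 (Or.inl hjk)
      · exact cons_lt_cons_iff.2 (Or.inr ⟨rfl, ih htail (by simpa using hb)⟩)

/-- Unless `c` extends `q`, comparing `c` with `q ++ s` is decided inside `q`. -/
theorem lt_append_of_lt_append_of_not_prefix {c q s : List α} (w : List α) (h : c < q ++ s)
    (hq : ¬ q <+: c) : c < q ++ w := by
  induction q generalizing c with
  | nil => exact absurd nil_prefix hq
  | cons j q ih =>
    cases c with
    | nil => exact nil_lt_cons _ _
    | cons k c =>
      rcases cons_lt_cons_iff.1 h with hkj | ⟨rfl, htail⟩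
      · exact cons_lt_cons_iff.2 (Or.inl hkj)
      · exact cons_lt_cons_iff.2 (Or.inr ⟨rfl, ih htail (by simpa using hq)⟩)

theorem lt_append_of_lt_append_of_length_le [Std.Irrefl (· < · : α → α → Prop)]
    {c q s w : List α} (h : c < q ++ s) (hc : c.length ≤ q.length) (hw : w ≠ []) :
    c < q ++ w := by
  by_cases hq : q <+: c
  · rw [hq.eq_of_length (le_antisymm hq.length_le hc)]
    exact lt_append_of_ne_nil c hw
  · exact lt_append_of_lt_append_of_not_prefix w h hq

end List

section Tuples

variable {d : ℕ}

theorem mem_Tl_iff {x : List ℕ} :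
    x ∈ Tl d ↔ ∃ p t, x = p ++ [t] ∧ (∀ j ∈ p, j = 1 ∨ j = 3) ∧ 1 ≤ t ∧ t ≤ 4 ∧ p.length < d := by
  induction d generalizing x with
  | zero => simp [Tl]
  | succ d ih =>
    simp only [Tl, List.mem_append, List.mem_map, List.mem_cons, List.not_mem_nil, or_false]
    constructor
    · rintro ((((rfl | ⟨y, hy, rfl⟩) | rfl | rfl) | ⟨y, hy, rfl⟩) | rfl)
      all_goals first
        | exact ⟨[], _, rfl, by simp, by norm_num, by norm_num, by simp⟩
        | obtain ⟨p, t, rfl, hp, ht⟩ := ih.1 hy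
          exact ⟨_ :: p, t, rfl, by simpa using hp, by simpa using ht⟩
    · rintro ⟨_ | ⟨j, p⟩, t, rfl, hp, ht1, ht4, hpd⟩
      · interval_cases t <;> simp
      · have hy : p ++ [t] ∈ Tl d :=
          ih.2 ⟨p, t, rfl, fun k hk => hp k (by simp [hk]), ht1, ht4, by simpa using hpd⟩
        rcases hp j (by simp) with rfl | rfl <;> simp [hy]

theorem length_le_of_mem_Tl {x : List ℕ} (hx : x ∈ Tl d) : x.length ≤ d := by
  obtain ⟨p, t, rfl, -, -, -, hpd⟩ := mem_Tl_iff.1 hx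
  simpa using hpd

theorem mem_Tl_of_forall {x : List ℕ} (hx : x ≠ []) (hxd : x.length ≤ d)
    (h13 : ∀ j ∈ x, j = 1 ∨ j = 3) : x ∈ Tl d := by
  refine mem_Tl_iff.2 ⟨x.dropLast, x.getLast hx, (List.dropLast_append_getLast hx).symm,
    fun j hj => h13 j (List.mem_of_mem_dropLast hj), ?_, ?_, ?_⟩
  · rcases h13 _ (List.getLast_mem hx) with h | h <;> omega
  · rcases h13 _ (List.getLast_mem hx) with h | h <;> omega
  · have := List.length_pos_of_ne_nil hx
    simp only [List.length_dropLast]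
    omega

theorem exists_mem_Tl_between_ascending {x y : List ℕ} {t : ℕ} (hy : y ∈ Tl d) (hxy : x < y)
    (hxt : x.length < t) (hty : t < y.length) :
    ∃ e ∈ Tl d, x < e ∧ e < y ∧ e.length = t := by
  obtain ⟨p, t₀, rfl, hp, -, -, hpd⟩ := mem_Tl_iff.1 hy
  simp only [List.length_append, List.length_singleton] at hty
  have hq : (p.take t).length = t := List.length_take_of_le (by omega)
  have hsplit : p ++ [t₀] = p.take t ++ (p.drop t ++ [t₀]) := by
    rw [← List.append_assoc, List.take_append_drop]
  refine ⟨p.take t, mem_Tl_of_forall ?_ (by omega) fun j hj => hp j (List.mem_of_mem_take hj),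
    ?_, ?_, hq⟩
  · exact List.ne_nil_of_length_pos (by omega)
  · rw [hsplit] at hxy
    simpa using List.lt_append_of_lt_append_of_not_prefix [] hxy
      fun h => by have := h.length_le; omega
  · rw [hsplit]
    exact List.lt_append_of_ne_nil _ (by simp)

theorem exists_mem_Tl_between_descending {x y : List ℕ} {t : ℕ} (hx : x ∈ Tl d) (hxy : x < y)
    (hyt : y.length < t) (htx : t < x.length) :
    ∃ e ∈ Tl d, x < e ∧ e < y ∧ e.length = t := by
  obtain ⟨p, t₀, rfl, hp, -, -, hpd⟩ := mem_Tl_iff.1 hx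
  simp only [List.length_append, List.length_singleton] at htx
  have hlt : t - 1 < p.length := by omega
  set j := p[t - 1]
  have hj : j = 1 ∨ j = 3 := hp j (List.getElem_mem hlt)
  have hdrop : p.drop (t - 1) = j :: p.drop t := by
    rw [List.drop_eq_getElem_cons hlt, Nat.sub_add_cancel (by omega)]
  have hsplit : p ++ [t₀] = p.take (t - 1) ++ (j :: (p.drop t ++ [t₀])) := by
    rw [← List.cons_append, ← hdrop, ← List.append_assoc, List.take_append_drop]
  have hq : (p.take (t - 1)).length = t - 1 := List.length_take_of_le (by omega)
  refine ⟨p.take (t - 1) ++ [j + 1], mem_Tl_iff.2 ⟨_, _, rfl,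
    fun k hk => hp k (List.mem_of_mem_take hk), by omega, by omega, by omega⟩, ?_, ?_, ?_⟩
  · rw [hsplit]
    exact List.append_left_lt (List.cons_lt_cons_iff.2 (Or.inl (Nat.lt_succ_self j)))
  · rw [hsplit] at hxy
    exact List.append_lt_of_append_lt_of_length_le _ hxy (by omega)
  · rw [List.length_append, hq, List.length_singleton]
    omega

theorem exists_mem_Tl_between_of_flat_ascending {a c v : List ℕ} {t : ℕ} (hc : c ∈ Tl d)
    (hac : a < c) (hcv : c < v) (hvc : v.length ≤ c.length) (hac' : a.length < c.length)
    (hct : c.length < t) (htd : t ≤ d) :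
    ∃ e ∈ Tl d, a < e ∧ e < v ∧ e.length = t := by
  obtain ⟨q, t₀, rfl, hq, ht₁, -, -⟩ := mem_Tl_iff.1 hc
  simp only [List.length_append, List.length_singleton] at hvc hac' hct
  have hlen : (q ++ 1 :: List.replicate (t - (q.length + 1)) 1).length = t := by
    simp only [List.length_append, List.length_cons, List.length_replicate]
    omega
  refine ⟨_, mem_Tl_of_forall (by simp) (hlen.trans_le htd) ?_,
    List.lt_append_of_lt_append_of_length_le hac (by omega) (by simp), ?_, hlen⟩
  · simp only [List.mem_append, List.mem_cons, List.mem_replicate]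
    rintro j (hj | rfl | ⟨-, rfl⟩)
    exacts [hq j hj, Or.inl rfl, Or.inl rfl]
  rcases eq_or_lt_of_le ht₁ with rfl | h1
  · rw [List.append_cons]
    exact List.append_lt_of_append_lt_of_length_le _ (by simpa using hcv) (by simpa using hvc)
  · exact lt_trans (List.append_left_lt (List.cons_lt_cons_iff.2 (Or.inl h1))) hcv

theorem exists_mem_Tl_between_of_flat_descending {b c v : List ℕ} {t : ℕ} (hv : v ∈ Tl d)
    (hcv : c < v) (hvb : v < b) (hcv' : c.length = v.length) (hbv : b.length < v.length)
    (hvt : v.length < t) (htd : t ≤ d) :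
    ∃ e ∈ Tl d, c < e ∧ e < b ∧ e.length = t := by
  obtain ⟨q, t₀, rfl, hq, -, ht₄, -⟩ := mem_Tl_iff.1 hv
  simp only [List.length_append, List.length_singleton] at hcv' hbv hvt
  have hlen : (q ++ 3 :: 1 :: List.replicate (t - (q.length + 2)) 1).length = t := by
    simp only [List.length_append, List.length_cons, List.length_replicate]
    omega
  refine ⟨_, mem_Tl_of_forall (by simp) (hlen.trans_le htd) ?_, ?_,
    List.append_lt_of_append_lt_of_length_le _ hvb (by omega), hlen⟩
  · simp only [List.mem_append, List.mem_cons, List.mem_replicate]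
    rintro j (hj | rfl | rfl | ⟨-, rfl⟩)
    exacts [hq j hj, Or.inr rfl, Or.inl rfl, Or.inl rfl]
  by_cases hqc : q <+: c
  · obtain ⟨s, rfl⟩ := hqc
    obtain ⟨t₁, rfl⟩ := List.length_eq_one_iff.1 (by simpa using hcv')
    have ht₁ : t₁ < t₀ := by
      by_contra! h
      rcases h.lt_or_eq with h | rfl
      · exact lt_asymm hcv (List.append_left_lt (List.cons_lt_cons_iff.2 (Or.inl h)))
      · exact lt_irrefl _ hcv
    refine List.append_left_lt (List.cons_lt_cons_iff.2 ?_)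
    rcases (show t₁ ≤ 3 by omega).lt_or_eq with h | rfl
    · exact Or.inl h
    · exact Or.inr ⟨rfl, List.nil_lt_cons _ _⟩
  · exact List.lt_append_of_lt_append_of_not_prefix _ hcv hqc

theorem exists_mem_Tl_between_of_flat {a b c v : List ℕ} (ha : a ∈ Tl d) (hb : b ∈ Tl d)
    (hc : c ∈ Tl d) (hv : v ∈ Tl d) (hac : a < c) (hcv : c < v) (hvb : v < b)
    (hlen : c.length = v.length) (hab : a.length ≠ b.length) :
    ∃ e ∈ Tl d, a < e ∧ e < b ∧ (e.length = a.length ∨ e.length = b.length) := by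
  have hcb' : c < b := hcv.trans hvb
  by_cases hca : c.length = a.length
  · exact ⟨c, hc, hac, hcb', Or.inl hca⟩
  by_cases hcb : c.length = b.length
  · exact ⟨c, hc, hac, hcb', Or.inr hcb⟩
  rcases hab.lt_or_gt with hab | hab
  · rcases lt_or_gt_of_ne hca with hca | hca
    · obtain ⟨e, he, hce, heb, hel⟩ := exists_mem_Tl_between_ascending hb hcb' hca hab
      exact ⟨e, he, hac.trans hce, heb, Or.inl hel⟩
    rcases lt_or_gt_of_ne hcb with hcb | hcb
    · obtain ⟨e, he, hae, hev, hel⟩ := exists_mem_Tl_between_of_flat_ascending hc hac hcv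
        hlen.ge hca hcb (length_le_of_mem_Tl hb)
      exact ⟨e, he, hae, hev.trans hvb, Or.inr hel⟩
    · obtain ⟨e, he, hae, hec, hel⟩ := exists_mem_Tl_between_ascending hc hac hab hcb
      exact ⟨e, he, hae, hec.trans hcb', Or.inr hel⟩
  · rcases lt_or_gt_of_ne hcb with hcb | hcb
    · obtain ⟨e, he, hae, hec, hel⟩ := exists_mem_Tl_between_descending ha hac hcb hab
      exact ⟨e, he, hae, hec.trans hcb', Or.inr hel⟩
    rcases lt_or_gt_of_ne hca with hca | hca
    · obtain ⟨e, he, hce, heb, hel⟩ := exists_mem_Tl_between_of_flat_descending hv hcv hvb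
        hlen (hlen ▸ hcb) (hlen ▸ hca) (length_le_of_mem_Tl ha)
      exact ⟨e, he, hac.trans hce, heb, Or.inl hel⟩
    · obtain ⟨e, he, hve, heb, hel⟩ := exists_mem_Tl_between_descending hv hvb hab (hlen ▸ hca)
      exact ⟨e, he, hac.trans (hcv.trans hve), heb, Or.inl hel⟩

end Tuples

/-- A proper interval `[a,b]` with `l(a) ≠ l(b)` contains no flat step. -/
theorem stmt7 (d : ℕ) (a b : List ℕ)
    (hp : ProperInterval d a b) (hl : a.length ≠ b.length) :
    ∀ c, c ∈ Tl d → lexLe a c → lexLt c b →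
      ∀ v, IsSucc d c v → v.length ≠ c.length := by
  rintro c hc hac hcb v ⟨hv, hcv, hmin⟩ hvc
  obtain ⟨ha, hb, -, hproper⟩ := hp
  suffices ∃ e ∈ Tl d, a < e ∧ e < b ∧ (e.length = a.length ∨ e.length = b.length) by
    obtain ⟨e, he, hae, heb, hel⟩ := this
    have := hproper e ⟨he, Or.inr hae, Or.inr heb⟩ hae.ne' heb.ne
    tauto
  rcases hac with rfl | hac <;> rcases hmin b hb hcb with rfl | hvb
  · exact absurd hvc.symm hl
  · exact ⟨v, hv, hcv, hvb, Or.inl hvc⟩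
  · exact ⟨c, hc, hac, hcv, Or.inr hvc.symm⟩
  · exact exists_mem_Tl_between_of_flat ha hb hc hv hac hcv hvb hvc.symm hl
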